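/- arXiv:1708.05488 — 8 statements merged into one kernel-verified Lean document; each statement's English description precedes it below -/
import Mathlib

section
/- If m is odd and a graph G is (2m,m)-choosable, then G is (2,1)-choosable (i.e., 2-choosable in the usual list-coloring sense). -/
/-! Replace every colour `α` by `m` fresh copies `Nat.pair α i`, so that a 2-list becomes a
`2m`-list. In an `m`-fold colouring from these lists each vertex receives `m` copies, and since
`m` is odd the copies of one of its two colours form a strict majority; colour the vertex with it.
Two adjacent vertices choose disjoint sets of copies, so they cannot both hold a strict majority of
the `m` copies of the same colour. -/

/-- `G` is `(a,b)`-choosable: from every assignment of `a`-element lists one can choose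
`b`-element subsets with adjacent vertices receiving disjoint subsets. -/
def FoldChoosable {V : Type*} (G : SimpleGraph V) (a b : ℕ) : Prop :=
  ∀ L : V → Finset ℕ, (∀ v, (L v).card = a) →
    ∃ φ : V → Finset ℕ, (∀ v, φ v ⊆ L v) ∧ (∀ v, (φ v).card = b) ∧
      ∀ v w, G.Adj v w → Disjoint (φ v) (φ w)

open Finset

def blowUp (m α : ℕ) : Finset ℕ :=
  (range m).image (Nat.pair α)

lemma card_blowUp (m α : ℕ) : #(blowUp m α) = m := by
  rw [blowUp, card_image_of_injective _ fun i j hij => (Nat.pair_eq_pair.mp hij).2, card_range]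

lemma disjoint_blowUp {m α β : ℕ} (h : α ≠ β) : Disjoint (blowUp m α) (blowUp m β) := by
  simp only [blowUp, disjoint_left, mem_image]
  rintro _ ⟨i, -, rfl⟩ ⟨j, -, hji⟩
  exact h (Nat.pair_eq_pair.mp hji).1.symm

lemma pairwiseDisjoint_blowUp (m : ℕ) (L : Finset ℕ) :
    (L : Set ℕ).PairwiseDisjoint (blowUp m) :=
  fun _ _ _ _ h => disjoint_blowUp h

lemma card_biUnion_blowUp (m : ℕ) (L : Finset ℕ) : #(L.biUnion (blowUp m)) = #L * m := by
  rw [card_biUnion (pairwiseDisjoint_blowUp m L), sum_congr rfl fun α _ => card_blowUp m α,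
    sum_const, smul_eq_mul]

lemma sum_card_inter_blowUp {m : ℕ} {L S : Finset ℕ} (hS : S ⊆ L.biUnion (blowUp m)) :
    ∑ α ∈ L, #(S ∩ blowUp m α) = #S := by
  rw [← card_biUnion fun α _ β _ h => (disjoint_blowUp h).mono inter_subset_right
    inter_subset_right, ← inter_biUnion, inter_eq_left.mpr hS]

lemma exists_two_mul_card_inter_blowUp_gt {m : ℕ} (hm : Odd m) {L S : Finset ℕ} (hL : #L = 2)
    (hS : S ⊆ L.biUnion (blowUp m)) (hSm : #S = m) :
    ∃ α ∈ L, m < 2 * #(S ∩ blowUp m α) := by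
  obtain ⟨α, β, hαβ, rfl⟩ := card_eq_two.mp hL
  have hsum := sum_card_inter_blowUp hS
  rw [sum_pair hαβ, hSm] at hsum
  obtain ⟨k, rfl⟩ := hm
  by_cases hα : 2 * k + 1 < 2 * #(S ∩ blowUp (2 * k + 1) α)
  · exact ⟨α, mem_insert_self α {β}, hα⟩
  · exact ⟨β, mem_insert_of_mem (mem_singleton_self β), by omega⟩

lemma card_inter_add_card_inter_le {ι : Type*} [DecidableEq ι] {S T : Finset ι}
    (hST : Disjoint S T) (B : Finset ι) : #(S ∩ B) + #(T ∩ B) ≤ #B := by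
  rw [← card_union_of_disjoint (hST.mono inter_subset_left inter_subset_left)]
  exact card_le_card (union_subset inter_subset_right inter_subset_right)

/-- If `m` is odd and `G` is `(2m,m)`-choosable, then `G` is `(2,1)`-choosable. -/
theorem stmt_3 {V : Type*} (G : SimpleGraph V) (m : ℕ) (hm : Odd m)
    (h : FoldChoosable G (2 * m) m) : FoldChoosable G 2 1 := by
  intro L hL
  obtain ⟨φ, hφL, hφcard, hφdisj⟩ := h (fun v => (L v).biUnion (blowUp m)) fun v => by
    rw [card_biUnion_blowUp, hL]
  choose c hcL hc using fun v => exists_two_mul_card_inter_blowUp_gt hm (hL v) (hφL v) (hφcard v)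
  refine ⟨fun v => {c v}, fun v => singleton_subset_iff.mpr (hcL v), fun v => card_singleton _,
    fun v w hvw => disjoint_singleton.mpr fun hcw => ?_⟩
  have hconflict := card_inter_add_card_inter_le (hφdisj v w hvw) (blowUp m (c v))
  have hv := hc v
  have hw := hc w
  rw [card_blowUp] at hconflict
  rw [← hcw] at hw
  omega
end

section
/- (Strong Minor Lemma, single step.) Let G be a graph, v ∈ V(G), and let G' be obtained from G by deleting v and identifying all neighbors of v into a single vertex. If G' is not (2m,m)-choosable, then G is not (2m,m)-choosable. -/
/-- The graph obtained from `G` by deleting `v` and identifying all of its neighbors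
into the single new vertex `none`. -/
def identifyNeighbors {V : Type*} (G : SimpleGraph V) (v : V) :
    SimpleGraph (Option {u : V // u ≠ v ∧ ¬ G.Adj v u}) :=
  SimpleGraph.fromRel (fun x y =>
    match x, y with
    | some a, some b => G.Adj a.1 b.1
    | none, some b => ∃ n, G.Adj v n ∧ G.Adj n b.1
    | _, _ => False)


/-!
In any `m`-fold coloring from `2m`-lists, a neighbor `n` of `v` with `L n = L v` avoids the
`m` colors of `v` inside the `2m`-set `L v`, so it receives exactly the complementary `m` colors.
Hence, if `v` and all its neighbors get the list of the identified vertex, every neighbor is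
colored `L v \ φ v`, and this common set is a valid color set for the identified vertex.
-/

open Finset

theorem Finset.eq_sdiff_of_disjoint_of_card_add_card {α : Type*} [DecidableEq α]
    {s t u : Finset α} (hs : s ⊆ u) (ht : t ⊆ u) (hst : Disjoint s t)
    (hcard : #s + #t = #u) : t = u \ s :=
  eq_of_subset_of_card_le (subset_sdiff.mpr ⟨ht, hst.symm⟩)
    (by rw [card_sdiff_of_subset hs]; omega)

namespace SimpleGraph

variable {V α : Type*}

structure IsFoldColoring (G : SimpleGraph V) (L φ : V → Finset α) (b : ℕ) : Prop where
  subset : ∀ v, φ v ⊆ L v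
  card : ∀ v, #(φ v) = b
  disjoint : ∀ ⦃v w⦄, G.Adj v w → Disjoint (φ v) (φ w)

theorem foldChoosable_iff {G : SimpleGraph V} {a b : ℕ} :
    FoldChoosable G a b ↔
      ∀ L : V → Finset ℕ, (∀ v, #(L v) = a) → ∃ φ, G.IsFoldColoring L φ b :=
  forall₂_congr fun _ _ => exists_congr fun _ =>
    ⟨fun ⟨hs, hc, hd⟩ => ⟨hs, hc, hd⟩, fun ⟨hs, hc, hd⟩ => ⟨hs, hc, hd⟩⟩

theorem IsFoldColoring.eq_sdiff_of_adj [DecidableEq α] {G : SimpleGraph V}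
    {L φ : V → Finset α} {b : ℕ} (hφ : G.IsFoldColoring L φ b) {v n : V}
    (hv : #(L v) = 2 * b) (hvn : G.Adj v n) (hL : L n = L v) :
    φ n = L v \ φ v :=
  eq_sdiff_of_disjoint_of_card_add_card (hφ.subset v) (hL ▸ hφ.subset n) (hφ.disjoint hvn)
    (by rw [hφ.card, hφ.card, hv]; ring)

variable (G : SimpleGraph V) (v : V)

noncomputable def collapseNeighbors (u : V) : Option {u : V // u ≠ v ∧ ¬ G.Adj v u} :=
  open Classical in if h : u ≠ v ∧ ¬ G.Adj v u then some ⟨u, h⟩ else none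

variable {G v}

theorem collapseNeighbors_self : collapseNeighbors G v v = none := by
  simp [collapseNeighbors]

theorem collapseNeighbors_of_adj {n : V} (hn : G.Adj v n) : collapseNeighbors G v n = none := by
  simp [collapseNeighbors, hn]

theorem collapseNeighbors_coe (a : {u : V // u ≠ v ∧ ¬ G.Adj v u}) :
    collapseNeighbors G v a = some a := by
  simp [collapseNeighbors, a.2]

theorem identifyNeighbors_adj_some_some {a b : {u : V // u ≠ v ∧ ¬ G.Adj v u}} :
    (identifyNeighbors G v).Adj (some a) (some b) ↔ G.Adj a b := by
  simp only [identifyNeighbors, fromRel_adj, ne_eq, Option.some.injEq, G.adj_comm b.1, or_self]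
  exact ⟨And.right, fun h => ⟨fun hab => h.ne (congrArg Subtype.val hab), h⟩⟩

theorem identifyNeighbors_adj_none_some {b : {u : V // u ≠ v ∧ ¬ G.Adj v u}} :
    (identifyNeighbors G v).Adj none (some b) ↔ ∃ n, G.Adj v n ∧ G.Adj n b := by
  simp [identifyNeighbors]

theorem IsFoldColoring.identifyNeighbors [DecidableEq α]
    {L : Option {u : V // u ≠ v ∧ ¬ G.Adj v u} → Finset α} {φ : V → Finset α} {b : ℕ}
    (hφ : G.IsFoldColoring (L ∘ collapseNeighbors G v) φ b) (hL : #(L none) = 2 * b) :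
    (identifyNeighbors G v).IsFoldColoring L (fun x => x.elim (L none \ φ v) (φ ·)) b := by
  have hLv : (L ∘ collapseNeighbors G v) v = L none := congrArg L collapseNeighbors_self
  have hφv : φ v ⊆ L none := hLv ▸ hφ.subset v
  have hnbr : ∀ n, G.Adj v n → φ n = L none \ φ v := fun n hvn =>
    hLv ▸ hφ.eq_sdiff_of_adj (hLv ▸ hL) hvn
      (congrArg L ((collapseNeighbors_of_adj hvn).trans collapseNeighbors_self.symm))
  have hdisj_none : ∀ b', (_root_.identifyNeighbors G v).Adj none (some b') →
      Disjoint (L none \ φ v) (φ b') := fun b' hadj => by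
    obtain ⟨n, hvn, hnb⟩ := identifyNeighbors_adj_none_some.mp hadj
    exact hnbr n hvn ▸ hφ.disjoint hnb
  refine ⟨?_, ?_, ?_⟩
  · rintro (_ | a)
    · exact sdiff_subset
    · simpa [collapseNeighbors_coe] using hφ.subset a
  · rintro (_ | a)
    · rw [Option.elim_none, card_sdiff_of_subset hφv, hL, hφ.card]; omega
    · exact hφ.card a
  · rintro (_ | a) (_ | b') hab
    · exact (hab.ne rfl).elim
    · exact hdisj_none b' hab
    · exact (hdisj_none a hab.symm).symm
    · exact hφ.disjoint (identifyNeighbors_adj_some_some.mp hab)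

end SimpleGraph

theorem stmt_6_general {V : Type*} (G : SimpleGraph V) (v : V) (m : ℕ)
    (h : ¬ FoldChoosable (identifyNeighbors G v) (2 * m) m) :
    ¬ FoldChoosable G (2 * m) m := by
  intro hG
  refine h (SimpleGraph.foldChoosable_iff.mpr fun L hL => ?_)
  obtain ⟨φ, hφ⟩ := SimpleGraph.foldChoosable_iff.mp hG (L ∘ SimpleGraph.collapseNeighbors G v) fun u => hL _
  exact ⟨_, hφ.identifyNeighbors (hL none)⟩

/-- Strong Minor Lemma, single step: if the graph obtained by deleting `v` and
identifying its neighbors is not `(2m,m)`-choosable, then neither is `G`. -/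
theorem stmt_6 {V : Type*} (G : SimpleGraph V) (v : V) (m : ℕ) (hm : 0 < m)
    (h : ¬ FoldChoosable (identifyNeighbors G v) (2 * m) m) :
    ¬ FoldChoosable G (2 * m) m :=
  stmt_6_general G v m h
end

section
/- On a 4-cycle v1v2v3v4 with lists L(v1)=L(v2)={1,...,2m}, L(v3)={2,...,2m+1}, L(v4)={1,...,2m−1,2m+1}, there is no m-fold L-coloring φ with φ(v1)={1,...,m}. -/
/-! The colour sets are forced one by one around the cycle: `φ(v2)` must be the `m` colours
of `L(v2)` left over by `φ(v1) = {1,…,m}`, which pins `φ(v3) = {2,…,m} ∪ {2m+1}`; then every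
colour of `L(v4)` available to `v4` lies in `{m+1,…,2m-1}`, which has only `m - 1` elements. -/

open Finset

theorem Finset.eq_sdiff_of_card_le {α : Type*} [DecidableEq α] {s t u : Finset α}
    (hst : s ⊆ t) (hsu : Disjoint s u) (hcard : #(t \ u) ≤ #s) : s = t \ u :=
  eq_of_subset_of_card_le (subset_sdiff.2 ⟨hst, hsu⟩) hcard

namespace FourCycle

variable (m : ℕ)

theorem list_v2_sdiff_color_v1 : Icc 1 (2 * m) \ Icc 1 m = Icc (m + 1) (2 * m) := by
  ext x; simp only [mem_sdiff, mem_Icc]; omega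

theorem list_v3_sdiff_color_v2 (hm : 0 < m) :
    Icc 2 (2 * m + 1) \ Icc (m + 1) (2 * m) = insert (2 * m + 1) (Icc 2 m) := by
  ext x; simp only [mem_sdiff, mem_insert, mem_Icc]; omega

theorem list_v4_sdiff_colors_v3_v1 :
    insert (2 * m + 1) (Icc 1 (2 * m - 1)) \ (insert (2 * m + 1) (Icc 2 m) ∪ Icc 1 m) =
      Icc (m + 1) (2 * m - 1) := by
  ext x; simp only [mem_sdiff, mem_union, mem_insert, mem_Icc]; omega

end FourCycle

open FourCycle in
/-- On the 4-cycle `v1v2v3v4` with lists `L(v1)=L(v2)={1,…,2m}`, `L(v3)={2,…,2m+1}`,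
`L(v4)={1,…,2m−1}∪{2m+1}`, there is no `m`-fold `L`-coloring with `φ(v1)={1,…,m}`. -/
theorem stmt_8 (m : ℕ) (hm : 0 < m) :
    ¬ ∃ φ1 φ2 φ3 φ4 : Finset ℕ,
        φ1 = Finset.Icc 1 m ∧
        φ1 ⊆ Finset.Icc 1 (2 * m) ∧ φ1.card = m ∧
        φ2 ⊆ Finset.Icc 1 (2 * m) ∧ φ2.card = m ∧
        φ3 ⊆ Finset.Icc 2 (2 * m + 1) ∧ φ3.card = m ∧
        φ4 ⊆ insert (2 * m + 1) (Finset.Icc 1 (2 * m - 1)) ∧ φ4.card = m ∧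
        Disjoint φ1 φ2 ∧ Disjoint φ2 φ3 ∧ Disjoint φ3 φ4 ∧ Disjoint φ4 φ1 := by
  rintro ⟨φ1, φ2, φ3, φ4, rfl, -, -, h2s, h2c, h3s, h3c, h4s, h4c, d12, d23, d34, d41⟩
  have hφ2 : φ2 = Icc (m + 1) (2 * m) := by
    rw [← list_v2_sdiff_color_v1]
    refine eq_sdiff_of_card_le h2s d12.symm ?_
    rw [list_v2_sdiff_color_v1, Nat.card_Icc, h2c]; omega
  subst hφ2
  have hφ3 : φ3 = insert (2 * m + 1) (Icc 2 m) := by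
    rw [← list_v3_sdiff_color_v2 m hm]
    refine eq_sdiff_of_card_le h3s d23.symm ?_
    rw [list_v3_sdiff_color_v2 m hm, card_insert_of_notMem (by rw [mem_Icc]; omega),
      Nat.card_Icc, h3c]
    omega
  subst hφ3
  have hφ4 : φ4 ⊆ Icc (m + 1) (2 * m - 1) := by
    rw [← list_v4_sdiff_colors_v3_v1]
    exact subset_sdiff.2 ⟨h4s, disjoint_union_right.2 ⟨d34.symm, d41⟩⟩
  have hcard := card_le_card hφ4
  rw [Nat.card_Icc, h4c] at hcard
  omega
end

section
/- The 4-cycle with the list assignment L(v1)=L(v2)={1,2,3,4}, L(v3)={1,2,3,5}, L(v4)={2,3,4,5} (vertices in cyclic order v1,v2,v3,v4) admits no 2-fold L-coloring φ with φ(v1) ∈ {{2,4},{3,4}}. -/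
namespace Finset

variable {α : Type*} [DecidableEq α]

theorem eq_sdiff_of_subset_of_disjoint_of_card_sdiff_le {s t A : Finset α} (hs : s ⊆ A)
    (hd : Disjoint t s) (hcard : (A \ t).card ≤ s.card) : s = A \ t :=
  eq_of_subset_of_card_le (subset_sdiff.mpr ⟨hs, hd.symm⟩) hcard

theorem card_le_card_sdiff_of_subset_of_disjoint {s t A : Finset α} (hs : s ⊆ A)
    (hd : Disjoint s t) : s.card ≤ (A \ t).card :=
  card_le_card (subset_sdiff.mpr ⟨hs, hd⟩)

end Finset

open Finset

/-- Once `φ₁` is fixed, the colorings of `v₂` and `v₃` along the path are forced (each has exactly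
`k` colors left), and then fewer than `k` colors remain for `v₄`. -/
theorem not_kfold_coloring_cycle4_of_forced {α : Type*} [DecidableEq α] {k : ℕ}
    {L₂ L₃ L₄ φ₁ φ₂ φ₃ φ₄ : Finset α}
    (h₂ : φ₂ ⊆ L₂) (hc₂ : φ₂.card = k) (h₃ : φ₃ ⊆ L₃) (hc₃ : φ₃.card = k)
    (h₄ : φ₄ ⊆ L₄) (hc₄ : φ₄.card = k)
    (d₁₂ : Disjoint φ₁ φ₂) (d₂₃ : Disjoint φ₂ φ₃) (d₃₄ : Disjoint φ₃ φ₄) (d₄₁ : Disjoint φ₄ φ₁)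
    (hforce₂ : (L₂ \ φ₁).card ≤ k) (hforce₃ : (L₃ \ (L₂ \ φ₁)).card ≤ k)
    (hblock : (L₄ \ (φ₁ ∪ L₃ \ (L₂ \ φ₁))).card < k) : False := by
  obtain rfl : φ₂ = L₂ \ φ₁ :=
    eq_sdiff_of_subset_of_disjoint_of_card_sdiff_le h₂ d₁₂ (hc₂ ▸ hforce₂)
  obtain rfl : φ₃ = L₃ \ (L₂ \ φ₁) :=
    eq_sdiff_of_subset_of_disjoint_of_card_sdiff_le h₃ d₂₃ (hc₃ ▸ hforce₃)
  have := card_le_card_sdiff_of_subset_of_disjoint h₄ (disjoint_union_right.mpr ⟨d₄₁, d₃₄.symm⟩)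
  omega

/-- The 4-cycle `v1v2v3v4` with lists `1234, 1234, 1235, 2345` admits no 2-fold
coloring with `φ(v1) ∈ {{2,4},{3,4}}` (so this assignment is `4_out`-forcing for `v1`). -/
theorem stmt_9 :
    ¬ ∃ φ1 φ2 φ3 φ4 : Finset ℕ,
        φ1 ⊆ ({1,2,3,4} : Finset ℕ) ∧ φ1.card = 2 ∧
        φ2 ⊆ ({1,2,3,4} : Finset ℕ) ∧ φ2.card = 2 ∧
        φ3 ⊆ ({1,2,3,5} : Finset ℕ) ∧ φ3.card = 2 ∧
        φ4 ⊆ ({2,3,4,5} : Finset ℕ) ∧ φ4.card = 2 ∧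
        Disjoint φ1 φ2 ∧ Disjoint φ2 φ3 ∧ Disjoint φ3 φ4 ∧ Disjoint φ4 φ1 ∧
        (φ1 = ({2,4} : Finset ℕ) ∨ φ1 = ({3,4} : Finset ℕ)) := by
  rintro ⟨φ1, φ2, φ3, φ4, -, -, h2s, h2c, h3s, h3c, h4s, h4c, d12, d23, d34, d41, hφ1⟩
  rcases hφ1 with rfl | rfl <;>
    exact not_kfold_coloring_cycle4_of_forced h2s h2c h3s h3c h4s h4c d12 d23 d34 d41
      (by decide) (by decide) (by decide)
end

section
/- The graph K_{2,3} with degree-3 vertices x and y (parts {x,y} and {p,q,r}), with lists L(p)={1,2,3,4}, L(q)={1,2,3,6}, L(r)={1,2,3,5}, L(x)={1,2,3,4}, L(y)={1,4,5,6}, satisfies: every 2-fold L-coloring φ has φ(x) ∉ {{1,2},{1,3},{2,3}}. -/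
/-
Once `φ(x)` is a 2-subset of `{1,2,3}`, each of `p, q, r` has exactly two colours of its list
left, namely the third colour of `{1,2,3}` together with `4`, `6`, `5` respectively. These three
colours `4, 5, 6` are then all barred from `y`, whose list `{1,4,5,6}` keeps only the colour `1`.
-/

namespace Finset

variable {α : Type*} [DecidableEq α]

theorem eq_sdiff_of_card_sdiff_le {s t u : Finset α} (hst : s ⊆ t) (hus : Disjoint u s)
    (h : #(t \ u) ≤ #s) : s = t \ u :=
  eq_of_subset_of_card_le (subset_sdiff.mpr ⟨hst, hus.symm⟩) h

end Finset

open Finset in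
theorem stmt_12_general (fx fy fp fq fr : Finset ℕ)
    (hy : fy ⊆ ({1,4,5,6} : Finset ℕ)) (hyc : fy.card = 2)
    (hp : fp ⊆ ({1,2,3,4} : Finset ℕ)) (hpc : fp.card = 2)
    (hq : fq ⊆ ({1,2,3,6} : Finset ℕ)) (hqc : fq.card = 2)
    (hr : fr ⊆ ({1,2,3,5} : Finset ℕ)) (hrc : fr.card = 2)
    (h1 : Disjoint fx fp) (h2 : Disjoint fx fq) (h3 : Disjoint fx fr)
    (h4 : Disjoint fy fp) (h5 : Disjoint fy fq) (h6 : Disjoint fy fr) :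
    fx ≠ ({1,2} : Finset ℕ) ∧ fx ≠ ({1,3} : Finset ℕ) ∧ fx ≠ ({2,3} : Finset ℕ) := by
  have not_forcing : ∀ S : Finset ℕ, #({1,2,3,4} \ S) ≤ 2 → #({1,2,3,6} \ S) ≤ 2 →
      #({1,2,3,5} \ S) ≤ 2 →
      #({1,4,5,6} \ (({1,2,3,4} \ S) ∪ ({1,2,3,6} \ S) ∪ ({1,2,3,5} \ S))) < 2 → fx ≠ S := by
    rintro S hpS hqS hrS hyS rfl
    have hp_eq := eq_sdiff_of_card_sdiff_le hp h1 (hpc ▸ hpS)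
    have hq_eq := eq_sdiff_of_card_sdiff_le hq h2 (hqc ▸ hqS)
    have hr_eq := eq_sdiff_of_card_sdiff_le hr h3 (hrc ▸ hrS)
    have hy_sub : fy ⊆ {1,4,5,6} \ (({1,2,3,4} \ fx) ∪ ({1,2,3,6} \ fx) ∪ ({1,2,3,5} \ fx)) := by
      rw [← hp_eq, ← hq_eq, ← hr_eq]
      exact subset_sdiff.mpr ⟨hy, disjoint_union_right.mpr ⟨disjoint_union_right.mpr ⟨h4, h5⟩, h6⟩⟩
    have := card_le_card hy_sub
    omega
  exact ⟨not_forcing _ (by decide) (by decide) (by decide) (by decide),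
    not_forcing _ (by decide) (by decide) (by decide) (by decide),
    not_forcing _ (by decide) (by decide) (by decide) (by decide)⟩

/-- `K_{2,3}` with degree-3 vertices `x, y` and degree-2 vertices `p, q, r`, with the
given lists: every 2-fold coloring has `φ(x) ∉ {{1,2},{1,3},{2,3}}`. -/
theorem stmt_12 (fx fy fp fq fr : Finset ℕ)
    (hx : fx ⊆ ({1,2,3,4} : Finset ℕ)) (hxc : fx.card = 2)
    (hy : fy ⊆ ({1,4,5,6} : Finset ℕ)) (hyc : fy.card = 2)
    (hp : fp ⊆ ({1,2,3,4} : Finset ℕ)) (hpc : fp.card = 2)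
    (hq : fq ⊆ ({1,2,3,6} : Finset ℕ)) (hqc : fq.card = 2)
    (hr : fr ⊆ ({1,2,3,5} : Finset ℕ)) (hrc : fr.card = 2)
    (h1 : Disjoint fx fp) (h2 : Disjoint fx fq) (h3 : Disjoint fx fr)
    (h4 : Disjoint fy fp) (h5 : Disjoint fy fq) (h6 : Disjoint fy fr) :
    fx ≠ ({1,2} : Finset ℕ) ∧ fx ≠ ({1,3} : Finset ℕ) ∧ fx ≠ ({2,3} : Finset ℕ) :=
  stmt_12_general fx fy fp fq fr hy hyc hp hpc hq hqc hr hrc h1 h2 h3 h4 h5 h6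
end

section
/- Let G be the 4-cycle and L any 4-list assignment. Then for every vertex v of G there exist at least four distinct 2-element subsets S ⊆ L(v) such that G has a 2-fold L-coloring φ with φ(v) = S. (Equivalently, no 4-assignment for C_4 is 3-forcing for any vertex.) -/
/-!
Put `a = v + 1`, `u = v + 2`, `b = v + 3`, with lists `A`, `U`, `B`. A pair `s ⊆ L v` extends to
a colouring iff some pair `t ⊆ U` leaves two colours of `A` and two of `B` outside `s ∪ t`; this
holds as soon as `t` has `#(A ∩ s)` colours outside `A \ s` and `#(B ∩ s)` outside `B \ s`.
Choosing `t` that way shows that a pair `s` which does not extend lies in `A ∪ B` and meets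
`A ∩ B` (otherwise `#(A ∩ s) + #(B ∩ s) ≤ 2`), leaves at most one colour of `U` outside
`(A ∪ B) \ s`, and lies in `A ∩ B` unless `U ⊆ (A ∪ B) \ s`. Hence all such pairs meet
`M = (A ∩ B) \ U` and lie in a set `R ⊇ M` with `#R + #M ≤ 4`: `R = (A ∩ B) ∪ ((A ∪ B) \ U)`
if `U ⊆ A ∪ B`, and `R = M` otherwise. There are at most `C(#R, 2) - C(#R - #M, 2) ≤ 2` of them,
so at least four of the six pairs of `L v` extend.
-/

/-- The 4-cycle on `Fin 4`, with edges `{i, i+1}`. -/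
def C4 : SimpleGraph (Fin 4) := SimpleGraph.fromRel (fun i j => j = i + 1)

open Finset

variable {α : Type*} [DecidableEq α] {A U B s : Finset α}

/-- `s` extends to a 2-fold colouring of a 4-cycle whose other vertices, in cyclic order, have
lists `A`, `U`, `B`: `t` colours the vertex opposite to `s`, and both neighbours keep two
colours. -/
def IsExtendable (A U B s : Finset α) : Prop :=
  ∃ t ⊆ U, #t = 2 ∧ 2 ≤ #(A \ (s ∪ t)) ∧ 2 ≤ #(B \ (s ∪ t))

lemma IsExtendable.symm (h : IsExtendable A U B s) : IsExtendable B U A s :=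
  let ⟨t, htU, ht, hA, hB⟩ := h
  ⟨t, htU, ht, hB, hA⟩

lemma exists_pair_superset {P Q X Y : Finset α} (hU : 2 ≤ #U) (hX : X ⊆ U \ P)
    (hY : Y ⊆ U \ Q) (hXY : #(X ∪ Y) ≤ 2) :
    ∃ t ⊆ U, #t = 2 ∧ #X ≤ #(t \ P) ∧ #Y ≤ #(t \ Q) := by
  obtain ⟨t, hXYt, htU, ht⟩ :=
    exists_subsuperset_card_eq (union_subset (hX.trans sdiff_subset) (hY.trans sdiff_subset))
      hXY hU
  refine ⟨t, htU, ht, card_le_card fun x hx => ?_, card_le_card fun x hx => ?_⟩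
  · exact mem_sdiff.2 ⟨hXYt (mem_union_left _ hx), (mem_sdiff.1 (hX hx)).2⟩
  · exact mem_sdiff.2 ⟨hXYt (mem_union_right _ hx), (mem_sdiff.1 (hY hx)).2⟩

lemma two_le_card_sdiff_union {t : Finset α} (hA : 4 ≤ #A) (ht : #t = 2)
    (h : #(A ∩ s) ≤ #(t \ (A \ s))) : 2 ≤ #(A \ (s ∪ t)) := by
  have h₁ := card_sdiff_add_card_inter A s
  have h₂ := card_sdiff_add_card_inter t (A \ s)
  have h₃ := card_sdiff_add_card_inter (A \ s) t
  rw [inter_comm] at h₃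
  rw [show A \ (s ∪ t) = (A \ s) \ t from sdiff_sdiff_left.symm]
  omega

lemma card_inter_le_card_sdiff (hA : #A = 4) (hU : #U = 4) : #(A ∩ s) ≤ #(U \ (A \ s)) := by
  have := le_card_sdiff (A \ s) U
  have := card_sdiff_add_card_inter A s
  omega

lemma card_inter_le_two (hs : #s = 2) : #(A ∩ s) ≤ 2 :=
  hs ▸ card_le_card inter_subset_right

lemma isExtendable_of_witnesses {X Y : Finset α} (hA : #A = 4) (hU : #U = 4) (hB : #B = 4)
    (hX : X ⊆ U \ (A \ s)) (hY : Y ⊆ U \ (B \ s)) (hXY : #(X ∪ Y) ≤ 2)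
    (hAX : #(A ∩ s) ≤ #X) (hBY : #(B ∩ s) ≤ #Y) : IsExtendable A U B s := by
  obtain ⟨t, htU, ht, hXt, hYt⟩ := exists_pair_superset (by omega) hX hY hXY
  exact ⟨t, htU, ht, two_le_card_sdiff_union hA.ge ht (hAX.trans hXt),
    two_le_card_sdiff_union hB.ge ht (hBY.trans hYt)⟩

lemma isExtendable_of_card_inter_add_card_inter_le (hA : #A = 4) (hU : #U = 4) (hB : #B = 4)
    (h : #(A ∩ s) + #(B ∩ s) ≤ 2) : IsExtendable A U B s := by
  obtain ⟨X, hX, hXc⟩ := exists_subset_card_eq (card_inter_le_card_sdiff (s := s) hA hU)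
  obtain ⟨Y, hY, hYc⟩ := exists_subset_card_eq (card_inter_le_card_sdiff (s := s) hB hU)
  exact isExtendable_of_witnesses hA hU hB hX hY ((card_union_le X Y).trans (by omega))
    hXc.ge hYc.ge

lemma isExtendable_of_two_le_card_sdiff (hA : #A = 4) (hU : #U = 4) (hB : #B = 4)
    (hs : #s = 2) (h : 2 ≤ #(U \ ((A ∪ B) \ s))) : IsExtendable A U B s := by
  obtain ⟨T, hT, hTc⟩ := exists_subset_card_eq h
  have hTA : T ⊆ U \ (A \ s) :=
    hT.trans (sdiff_subset_sdiff le_rfl (sdiff_subset_sdiff subset_union_left le_rfl))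
  have hTB : T ⊆ U \ (B \ s) :=
    hT.trans (sdiff_subset_sdiff le_rfl (sdiff_subset_sdiff subset_union_right le_rfl))
  exact isExtendable_of_witnesses hA hU hB hTA hTB (by simp [hTc])
    (hTc ▸ card_inter_le_two hs) (hTc ▸ card_inter_le_two hs)

lemma isExtendable_of_not_subset_of_mem (hA : #A = 4) (hU : #U = 4) (hB : #B = 4)
    (hs : #s = 2) (hsB : ¬ s ⊆ B) {x : α} (hxU : x ∈ U) (hx : x ∉ (A ∪ B) \ s) :
    IsExtendable A U B s := by
  have hxA : x ∈ U \ (A \ s) :=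
    mem_sdiff.2 ⟨hxU, fun h => hx (sdiff_subset_sdiff subset_union_left le_rfl h)⟩
  have hxB : x ∈ U \ (B \ s) :=
    mem_sdiff.2 ⟨hxU, fun h => hx (sdiff_subset_sdiff subset_union_right le_rfl h)⟩
  have hBs : #(B ∩ s) < #s :=
    card_lt_card ⟨inter_subset_right, fun h => hsB fun y hy => (mem_inter.1 (h hy)).1⟩
  obtain ⟨X, hxX, hX, hXc⟩ := exists_subsuperset_card_eq (singleton_subset_iff.2 hxA)
    (n := max #(A ∩ s) 1) (by simp)
    (max_le (card_inter_le_card_sdiff hA hU) (card_pos.2 ⟨x, hxA⟩))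
  have hAs := card_inter_le_two (A := A) hs
  refine isExtendable_of_witnesses hA hU hB hX (singleton_subset_iff.2 hxB) ?_ (by omega)
    (by rw [card_singleton]; omega)
  rw [union_eq_left.2 hxX, hXc]
  omega

lemma subset_union_and_inter_nonempty (hs : #s = 2) (h : 2 < #(A ∩ s) + #(B ∩ s)) :
    s ⊆ A ∪ B ∧ (A ∩ B ∩ s).Nonempty := by
  have hsum := card_union_add_card_inter (A ∩ s) (B ∩ s)
  rw [← union_inter_distrib_right, ← inter_inter_distrib_right] at hsum
  have hW := card_inter_le_two (A := A ∪ B) hs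
  have hDW : #(A ∩ B ∩ s) ≤ #((A ∪ B) ∩ s) :=
    card_le_card (inter_subset_inter_right inter_subset_union)
  exact ⟨inter_eq_right.1 (eq_of_subset_of_card_le inter_subset_right (by omega)),
    card_pos.1 (by omega)⟩

lemma subset_union_and_inter_nonempty_of_not_isExtendable (hA : #A = 4) (hU : #U = 4)
    (hB : #B = 4) (hs : #s = 2) (h : ¬ IsExtendable A U B s) :
    s ⊆ A ∪ B ∧ (A ∩ B ∩ s).Nonempty :=
  subset_union_and_inter_nonempty hs <|
    lt_of_not_ge fun h' => h (isExtendable_of_card_inter_add_card_inter_le hA hU hB h')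

lemma card_sdiff_le_one_of_not_isExtendable (hA : #A = 4) (hU : #U = 4)
    (hB : #B = 4) (hs : #s = 2) (h : ¬ IsExtendable A U B s) :
    #(U \ ((A ∪ B) \ s)) ≤ 1 :=
  le_of_not_gt fun h' => h (isExtendable_of_two_le_card_sdiff hA hU hB hs h')

lemma subset_inter_or_subset_of_not_isExtendable (hA : #A = 4) (hU : #U = 4)
    (hB : #B = 4) (hs : #s = 2) (h : ¬ IsExtendable A U B s) :
    s ⊆ A ∩ B ∨ U ⊆ (A ∪ B) \ s := by
  refine or_iff_not_imp_left.2 fun hsD => not_not.1 fun hUs => ?_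
  obtain ⟨x, hxU, hx⟩ := not_subset.1 hUs
  rcases not_and_or.1 (subset_inter_iff.not.1 hsD) with hsA | hsB
  · exact h (isExtendable_of_not_subset_of_mem hB hU hA hs hsA hxU (by rwa [union_comm])).symm
  · exact h (isExtendable_of_not_subset_of_mem hA hU hB hs hsB hxU hx)

lemma subset_and_inter_nonempty_of_not_isExtendable (hA : #A = 4) (hU : #U = 4)
    (hB : #B = 4) (hs : #s = 2) (h : ¬ IsExtendable A U B s) :
    s ⊆ A ∩ B ∪ (A ∪ B) \ U ∧ (s ∩ (A ∩ B ∩ ((A ∪ B) \ U))).Nonempty := by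
  obtain ⟨hsW, y, hy⟩ := subset_union_and_inter_nonempty_of_not_isExtendable hA hU hB hs h
  rcases subset_inter_or_subset_of_not_isExtendable hA hU hB hs h with hsD | hUs
  · refine ⟨hsD.trans subset_union_left, ?_⟩
    have hsU : ¬ s ⊆ U := fun hsU => by
      have := card_le_card (s := s) (t := U \ ((A ∪ B) \ s)) fun z hz =>
        mem_sdiff.2 ⟨hsU hz, fun h => (mem_sdiff.1 h).2 hz⟩
      have := card_sdiff_le_one_of_not_isExtendable hA hU hB hs h
      omega
    obtain ⟨z, hzs, hzU⟩ := not_subset.1 hsU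
    exact ⟨z, by grind⟩
  · have hsZ : s ⊆ (A ∪ B) \ U := fun z hz =>
      mem_sdiff.2 ⟨hsW hz, fun hzU => (mem_sdiff.1 (hUs hzU)).2 hz⟩
    exact ⟨hsZ.trans subset_union_right, y, by grind⟩

lemma subset_inter_sdiff_of_not_isExtendable (hA : #A = 4) (hU : #U = 4)
    (hB : #B = 4) (hs : #s = 2) (h : ¬ IsExtendable A U B s)
    (hUW : ¬ U ⊆ A ∪ B) : s ⊆ (A ∩ B) \ U := by
  obtain ⟨u, huU, huW⟩ := not_subset.1 hUW
  have hsD := (subset_inter_or_subset_of_not_isExtendable hA hU hB hs h).resolve_right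
    fun h => hUW (h.trans sdiff_subset)
  have hone := card_le_one.1 (card_sdiff_le_one_of_not_isExtendable hA hU hB hs h)
  refine fun z hz => mem_sdiff.2 ⟨hsD hz, fun hzU => huW ?_⟩
  -- `u ∉ A ∪ B` and `z ∈ s ∩ U` would be two colours of `U` outside `(A ∪ B) \ s`.
  rw [hone u (mem_sdiff.2 ⟨huU, fun h => huW (mem_sdiff.1 h).1⟩) z
    (mem_sdiff.2 ⟨hzU, fun h => (mem_sdiff.1 h).2 hz⟩)]
  exact inter_subset_union (hsD hz)

lemma card_inter_sdiff_le_two (hA : #A = 4) (hB : #B = 4) (hU : #U = 4)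
    (hUW : #(U \ (A ∪ B)) ≤ 1) : #((A ∩ B) \ U) ≤ 2 := by
  have := card_union_add_card_inter A B
  have := card_sdiff_add_card_inter U (A ∪ B)
  have := card_union_of_disjoint (s := U ∩ (A ∪ B)) (t := (A ∩ B) \ U)
    (disjoint_left.2 fun z hz h => (mem_sdiff.1 h).2 (mem_inter.1 hz).1)
  have : #(U ∩ (A ∪ B) ∪ (A ∩ B) \ U) ≤ #(A ∪ B) :=
    card_le_card (union_subset inter_subset_right (sdiff_subset.trans inter_subset_union))
  have := card_le_card (sdiff_subset (s := A ∩ B) (t := U))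
  omega

lemma card_le_two_of_forall_subset_inter_nonempty {R M : Finset α} {𝒮 : Finset (Finset α)}
    (hMR : M ⊆ R) (hRM : #R + #M ≤ 4)
    (h𝒮 : ∀ s ∈ 𝒮, #s = 2 ∧ s ⊆ R ∧ (s ∩ M).Nonempty) : #𝒮 ≤ 2 := by
  have h𝒮R : 𝒮 ⊆ R.powersetCard 2 \ (R \ M).powersetCard 2 := by
    intro s hs
    obtain ⟨hs2, hsR, y, hy⟩ := h𝒮 s hs
    simp only [mem_sdiff, mem_powersetCard, hs2, hsR, and_true, true_and]
    exact fun h => (mem_sdiff.1 (h (mem_inter.1 hy).1)).2 (mem_inter.1 hy).2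
  refine (card_le_card h𝒮R).trans ?_
  rw [card_sdiff_of_subset (powersetCard_mono sdiff_subset), card_powersetCard,
    card_powersetCard, card_sdiff_of_subset hMR]
  have := card_le_card hMR
  generalize #R = r, #M = m at *
  have : r ≤ 4 := by omega
  have : m ≤ 4 - r := by omega
  interval_cases r <;> interval_cases m <;> decide

lemma card_le_two_of_forall_not_isExtendable (hA : #A = 4) (hU : #U = 4) (hB : #B = 4)
    {𝒮 : Finset (Finset α)} (h𝒮 : ∀ s ∈ 𝒮, #s = 2 ∧ ¬ IsExtendable A U B s) :
    #𝒮 ≤ 2 := by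
  by_cases hUW : U ⊆ A ∪ B
  · refine card_le_two_of_forall_subset_inter_nonempty inter_subset_union ?_ fun s hs =>
      ⟨(h𝒮 s hs).1, subset_and_inter_nonempty_of_not_isExtendable hA hU hB (h𝒮 s hs).1
        (h𝒮 s hs).2⟩
    have := card_union_add_card_inter A B
    have := card_union_add_card_inter (A ∩ B) ((A ∪ B) \ U)
    have := card_sdiff_of_subset hUW
    have := card_le_card hUW
    omega
  · rcases 𝒮.eq_empty_or_nonempty with rfl | ⟨s₀, hs₀⟩
    · simp
    have hsD s (hs : s ∈ 𝒮) :=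
      subset_inter_sdiff_of_not_isExtendable hA hU hB (h𝒮 s hs).1 (h𝒮 s hs).2 hUW
    refine card_le_two_of_forall_subset_inter_nonempty subset_rfl ?_
      fun s hs => ⟨(h𝒮 s hs).1, hsD s hs, ?_⟩
    · have := card_inter_sdiff_le_two hA hB hU <|
        (card_le_card (sdiff_subset_sdiff subset_rfl sdiff_subset)).trans <|
          card_sdiff_le_one_of_not_isExtendable hA hU hB (h𝒮 s₀ hs₀).1 (h𝒮 s₀ hs₀).2
      omega
    · rw [inter_eq_left.2 (hsD s hs)]
      exact card_pos.1 (by rw [(h𝒮 s hs).1]; omega)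

lemma exists_four_isExtendable {V : Finset α} (hV : #V = 4) (hA : #A = 4) (hU : #U = 4)
    (hB : #B = 4) :
    ∃ 𝒮 : Finset (Finset α), 4 ≤ #𝒮 ∧
      ∀ s ∈ 𝒮, s ⊆ V ∧ #s = 2 ∧ IsExtendable A U B s := by
  classical
  refine ⟨(V.powersetCard 2).filter (IsExtendable A U B), ?_, fun s hs => ?_⟩
  · have hsplit := card_filter_add_card_filter_not (s := V.powersetCard 2)
      (p := IsExtendable A U B)
    have hbad := card_le_two_of_forall_not_isExtendable hA hU hB
      (𝒮 := (V.powersetCard 2).filter (¬ IsExtendable A U B ·))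
      fun s hs => ⟨(mem_powersetCard.1 (mem_filter.1 hs).1).2, (mem_filter.1 hs).2⟩
    rw [card_powersetCard, hV] at hsplit
    have : Nat.choose 4 2 = 6 := rfl
    omega
  · obtain ⟨hs, hext⟩ := mem_filter.1 hs
    exact ⟨(mem_powersetCard.1 hs).1, (mem_powersetCard.1 hs).2, hext⟩

lemma exists_C4_coloring_of_cyclic {β : Type*} (L : Fin 4 → Finset β) (v : Fin 4)
    (c : Fin 4 → Finset β) (hL : ∀ k, c k ⊆ L (v + k)) (hc : ∀ k, #(c k) = 2)
    (hdisj : ∀ k, Disjoint (c k) (c (k + 1))) :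
    ∃ φ : Fin 4 → Finset β, (∀ i, φ i ⊆ L i) ∧ (∀ i, #(φ i) = 2) ∧
      (∀ i j, C4.Adj i j → Disjoint (φ i) (φ j)) ∧ φ v = c 0 := by
  refine ⟨fun i => c (i - v), fun i => by simpa using hL (i - v), fun i => hc _,
    fun i j hij => ?_, by simp⟩
  obtain ⟨-, rfl | rfl⟩ := (SimpleGraph.fromRel_adj _ _ _).1 hij
  · simpa [sub_add_eq_add_sub] using hdisj (i - v)
  · simpa [sub_add_eq_add_sub] using (hdisj (j - v)).symm

/-- For every 4-list assignment `L` on `C_4` and every vertex `v`, at least four distinct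
2-subsets of `L v` are achievable as `φ v` in some 2-fold `L`-coloring: no 4-assignment
for `C_4` is 3-forcing for any vertex. -/
theorem stmt_16 (L : Fin 4 → Finset ℕ) (hL : ∀ i, (L i).card = 4) (v : Fin 4) :
    ∃ S : Finset (Finset ℕ), 4 ≤ S.card ∧
      ∀ s ∈ S, s ⊆ L v ∧ s.card = 2 ∧
        ∃ φ : Fin 4 → Finset ℕ, (∀ i, φ i ⊆ L i) ∧ (∀ i, (φ i).card = 2) ∧
          (∀ i j, C4.Adj i j → Disjoint (φ i) (φ j)) ∧ φ v = s := by
  obtain ⟨S, hS, hSext⟩ :=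
    exists_four_isExtendable (hL v) (hL (v + 1)) (hL (v + 2)) (hL (v + 3))
  refine ⟨S, hS, fun s hs => ?_⟩
  obtain ⟨hsL, hs, t, htL, ht, ha, hb⟩ := hSext s hs
  obtain ⟨a, haL, ha2⟩ := exists_subset_card_eq ha
  obtain ⟨b, hbL, hb2⟩ := exists_subset_card_eq hb
  have ha' := disjoint_union_right.1 (disjoint_of_subset_left haL sdiff_disjoint)
  have hb' := disjoint_union_right.1 (disjoint_of_subset_left hbL sdiff_disjoint)
  refine ⟨hsL, hs, exists_C4_coloring_of_cyclic L v ![s, a, t, b] (fun k => ?_) (fun k => ?_)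
    (fun k => ?_)⟩
  · fin_cases k
    exacts [by simpa using hsL, haL.trans sdiff_subset, htL, hbL.trans sdiff_subset]
  · fin_cases k <;> assumption
  · fin_cases k
    exacts [ha'.1.symm, ha'.2, hb'.2.symm, hb'.1]
end

section
/- Let L and L' be list assignments for a graph G such that L' is obtained from L by a single flattening move: for some color α, some connected component C of the subgraph G_α induced by vertices with α in their list, and some color β not in any list L(v) for v ∈ V(C), replace α by β in L(v) for every v ∈ V(C). Then the map sending a b-fold L'-coloring φ' to the coloring obtained by replacing β with α in φ'(v) for each v ∈ V(C) with β ∈ φ'(v) is an injection from b-fold L'-colorings of G to b-fold L-colorings of G. -/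
/-!
On `C` a flattened coloring never uses `α` (it is not in `L'`), so undoing the move is
applying the transposition `(α β)` to the colors of the vertices of `C`. A permutation of
colors preserves sizes, inclusions and disjointness, is injective, and carries `L'` back to
`L` because `β ∉ L` on `C`. The only edges needing care join `v ∈ C` to `w ∉ C`: since `C` is
closed in `G_α`, `α ∉ L w`, so the new color `α` at `v` cannot clash with `w`.
-/

/-- `φ` is a `b`-fold `L`-coloring of `G`. -/
def IsFoldColoring {V : Type*} (G : SimpleGraph V) (L : V → Finset ℕ) (b : ℕ)
    (φ : V → Finset ℕ) : Prop :=
  (∀ v, φ v ⊆ L v) ∧ (∀ v, (φ v).card = b) ∧ ∀ v w, G.Adj v w → Disjoint (φ v) (φ w)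

open scoped Classical

namespace Finset

variable {ι : Type*} [DecidableEq ι] {a b : ι} {s t : Finset ι}

theorem map_swap_of_notMem (ha : a ∉ s) :
    s.map (Equiv.swap a b).toEmbedding = if b ∈ s then insert a (s.erase b) else s := by
  ext x
  rw [mem_map_equiv, Equiv.symm_swap]
  rcases eq_or_ne x a with rfl | hxa
  · split_ifs with hb <;> simp [hb, ha]
  rcases eq_or_ne x b with rfl | hxb
  · split_ifs with hb <;> simp [hb, ha, hxa]
  · split_ifs <;> simp [Equiv.swap_apply_of_ne_of_ne hxa hxb, hxa, hxb]

theorem map_swap_insert_erase (ha : a ∈ t) (hb : b ∉ t) :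
    (insert b (t.erase a)).map (Equiv.swap a b).toEmbedding = t := by
  have hab : a ≠ b := ne_of_mem_of_not_mem ha hb
  rw [map_swap_of_notMem (by simp [hab]), if_pos (mem_insert_self b _),
    erase_insert (fun h => hb (mem_of_mem_erase h)), insert_erase ha]

theorem map_swap_subset_insert (ha : a ∉ s) :
    s.map (Equiv.swap a b).toEmbedding ⊆ insert a s := by
  rw [map_swap_of_notMem ha]
  split_ifs
  · exact insert_subset_insert a (erase_subset b s)
  · exact subset_insert a s

end Finset

open Finset

section Flattening

variable {V : Type*} {G : SimpleGraph V} {L : V → Finset ℕ} {b : ℕ} {C : Set V} {α β : ℕ}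

variable (L C α β) in
noncomputable def flattenList (v : V) : Finset ℕ := if v ∈ C then insert β ((L v).erase α) else L v

variable (C α β) in
noncomputable def unflatten (φ : V → Finset ℕ) (v : V) : Finset ℕ :=
  if v ∈ C ∧ β ∈ φ v then insert α ((φ v).erase β) else φ v

variable (C α β) in
noncomputable def unflattenPerm (v : V) : Equiv.Perm ℕ := if v ∈ C then Equiv.swap α β else 1

theorem flattenList_map_unflattenPerm (hCsub : ∀ v ∈ C, α ∈ L v) (hβ : ∀ v ∈ C, β ∉ L v)
    (v : V) : (flattenList L C α β v).map (unflattenPerm C α β v).toEmbedding = L v := by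
  unfold flattenList unflattenPerm
  split_ifs with hv
  · exact map_swap_insert_erase (hCsub v hv) (hβ v hv)
  · exact map_refl

theorem notMem_of_isFoldColoring_flattenList (hCsub : ∀ v ∈ C, α ∈ L v)
    (hβ : ∀ v ∈ C, β ∉ L v) {φ : V → Finset ℕ} (hφ : IsFoldColoring G (flattenList L C α β) b φ)
    {v : V} (hv : v ∈ C) : α ∉ φ v := fun h => by
  have hαβ : α ≠ β := ne_of_mem_of_not_mem (hCsub v hv) (hβ v hv)
  simpa [flattenList, hv, hαβ] using hφ.1 v h

theorem unflatten_eq_map {φ : V → Finset ℕ} (hφ : ∀ v ∈ C, α ∉ φ v) (v : V) :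
    unflatten C α β φ v = (φ v).map (unflattenPerm C α β v).toEmbedding := by
  unfold unflatten unflattenPerm
  by_cases hv : v ∈ C
  · simp only [hv, true_and, if_true, map_swap_of_notMem (hφ v hv)]
  · simp only [hv, false_and, if_false]; exact map_refl.symm

theorem disjoint_unflatten_of_mem_of_notMem
    (hClosed : ∀ v ∈ C, ∀ w, α ∈ L w → G.Adj v w → w ∈ C)
    {φ : V → Finset ℕ} (hφ : IsFoldColoring G (flattenList L C α β) b φ) (hαφ : ∀ v ∈ C, α ∉ φ v)
    {v w : V} (hvw : G.Adj v w) (hv : v ∈ C) (hw : w ∉ C) :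
    Disjoint (unflatten C α β φ v) (unflatten C α β φ w) := by
  have hαw : α ∉ φ w := fun h =>
    hw (hClosed v hv w (by simpa [flattenList, hw] using hφ.1 w h) hvw)
  rw [unflatten_eq_map hαφ, unflattenPerm, if_pos hv, unflatten, if_neg (fun h => hw h.1)]
  exact (disjoint_insert_left.2 ⟨hαw, hφ.2.2 v w hvw⟩).mono_left
    (map_swap_subset_insert (hαφ v hv))

theorem isFoldColoring_unflatten (hCsub : ∀ v ∈ C, α ∈ L v)
    (hClosed : ∀ v ∈ C, ∀ w, α ∈ L w → G.Adj v w → w ∈ C) (hβ : ∀ v ∈ C, β ∉ L v)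
    {φ : V → Finset ℕ} (hφ : IsFoldColoring G (flattenList L C α β) b φ) :
    IsFoldColoring G L b (unflatten C α β φ) := by
  have hαφ : ∀ v ∈ C, α ∉ φ v := fun v => notMem_of_isFoldColoring_flattenList hCsub hβ hφ
  refine ⟨fun v => ?_, fun v => ?_, fun v w hvw => ?_⟩
  · rw [unflatten_eq_map hαφ, ← flattenList_map_unflattenPerm hCsub hβ v]
    exact map_subset_map.2 (hφ.1 v)
  · rw [unflatten_eq_map hαφ, card_map]
    exact hφ.2.1 v
  by_cases hv : v ∈ C <;> by_cases hw : w ∈ C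
  · rw [unflatten_eq_map hαφ, unflatten_eq_map hαφ, unflattenPerm, unflattenPerm, if_pos hv,
      if_pos hw, disjoint_map]
    exact hφ.2.2 v w hvw
  · exact disjoint_unflatten_of_mem_of_notMem hClosed hφ hαφ hvw hv hw
  · exact (disjoint_unflatten_of_mem_of_notMem hClosed hφ hαφ hvw.symm hw hv).symm
  · rw [unflatten, unflatten, if_neg (fun h => hv h.1), if_neg (fun h => hw h.1)]
    exact hφ.2.2 v w hvw

theorem unflatten_injOn : Set.InjOn (unflatten C α β) {φ | ∀ v ∈ C, α ∉ φ v} := by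
  intro φ hφ ψ hψ h
  funext v
  have hv := congrFun h v
  rw [unflatten_eq_map hφ, unflatten_eq_map hψ] at hv
  exact map_injective _ hv

end Flattening

theorem stmt_17_general {V : Type*} (G : SimpleGraph V) (L : V → Finset ℕ) (b : ℕ) (α β : ℕ)
    (C : Set V)
    (hCsub : ∀ v ∈ C, α ∈ L v)
    (hClosed : ∀ v ∈ C, ∀ w, α ∈ L w → G.Adj v w → w ∈ C)
    (hβ : ∀ v ∈ C, β ∉ L v)
    (L' : V → Finset ℕ)
    (hL' : ∀ v, L' v = if v ∈ C then insert β ((L v).erase α) else L v)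
    (Φ : (V → Finset ℕ) → (V → Finset ℕ))
    (hΦ : ∀ φ' v, Φ φ' v = if v ∈ C ∧ β ∈ φ' v then insert α ((φ' v).erase β) else φ' v) :
    (∀ φ', IsFoldColoring G L' b φ' → IsFoldColoring G L b (Φ φ')) ∧
      (∀ φ' ψ', IsFoldColoring G L' b φ' → IsFoldColoring G L' b ψ' →
        Φ φ' = Φ ψ' → φ' = ψ') := by
  obtain rfl : L' = flattenList L C α β := funext hL'
  obtain rfl : Φ = unflatten C α β := funext fun φ' => funext (hΦ φ')
  have hα : ∀ φ', IsFoldColoring G (flattenList L C α β) b φ' → ∀ v ∈ C, α ∉ φ' v :=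
    fun _ hφ' _ => notMem_of_isFoldColoring_flattenList hCsub hβ hφ'
  exact ⟨fun _ => isFoldColoring_unflatten hCsub hClosed hβ,
    fun φ' ψ' hφ' hψ' => unflatten_injOn (hα φ' hφ') (hα ψ' hψ')⟩

/-- Flattening move: if `L'` is obtained from `L` by replacing `α` with `β` on a
connected component `C` of `G_α` (where `β` appears in no list on `C`), then replacing
`β` back by `α` maps `b`-fold `L'`-colorings injectively to `b`-fold `L`-colorings. -/
theorem stmt_17 {V : Type*} (G : SimpleGraph V) (L : V → Finset ℕ) (b : ℕ) (α β : ℕ)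
    (C : Set V)
    (hCsub : ∀ v ∈ C, α ∈ L v)
    (hConn : (SimpleGraph.induce C G).Connected)
    (hClosed : ∀ v ∈ C, ∀ w, α ∈ L w → G.Adj v w → w ∈ C)
    (hβ : ∀ v ∈ C, β ∉ L v)
    (L' : V → Finset ℕ)
    (hL' : ∀ v, L' v = if v ∈ C then insert β ((L v).erase α) else L v)
    (Φ : (V → Finset ℕ) → (V → Finset ℕ))
    (hΦ : ∀ φ' v, Φ φ' v = if v ∈ C ∧ β ∈ φ' v then insert α ((φ' v).erase β) else φ' v) :
    (∀ φ', IsFoldColoring G L' b φ' → IsFoldColoring G L b (Φ φ')) ∧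
      (∀ φ' ψ', IsFoldColoring G L' b φ' → IsFoldColoring G L' b ψ' →
        Φ φ' = Φ ψ' → φ' = ψ') :=
  stmt_17_general G L b α β C hCsub hClosed hβ L' hL' Φ hΦ
end

section
/- If a graph G has an ear decomposition then G is 2-connected, and conversely: if G is 2-connected and H is a 2-connected subgraph of G, then G has an ear decomposition beginning with an ear decomposition of H. -/
/-- `G` is 2-connected: at least 3 vertices, connected, and no cut-vertex. -/
def TwoConnected {V : Type*} (G : SimpleGraph V) : Prop :=
  3 ≤ Nat.card V ∧ G.Connected ∧
    ∀ v : V, (SimpleGraph.induce ({v}ᶜ : Set V) G).Connected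

/-- `EarExt G H K` : the subgraph `K` of `G` can be obtained from `H` by successively
adding ears: paths of positive length with endpoints in the current subgraph, internal
vertices outside it, and all edges new. -/
inductive EarExt {V : Type*} (G : SimpleGraph V) : G.Subgraph → G.Subgraph → Prop
  | refl (H : G.Subgraph) : EarExt G H H
  | ear {H K : G.Subgraph} (hHK : EarExt G H K) {u v : V} (p : G.Walk u v)
      (hp : p.IsPath) (hlen : 0 < p.length) (hu : u ∈ K.verts) (hv : v ∈ K.verts)
      (hint : ∀ w ∈ p.support, w ≠ u → w ≠ v → w ∉ K.verts)
      (hedge : ∀ e ∈ p.edges, e ∉ K.edgeSet) :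
      EarExt G H (K ⊔ p.toSubgraph)

/-- `H` is the start of an ear decomposition: a single edge `P₀ = uv` together with a
first ear `P₁`, a `u,v`-path avoiding the edge `uv`, so that `P₀ ∪ P₁` is a cycle. -/
def IsCycleStart {V : Type*} (G : SimpleGraph V) (H : G.Subgraph) : Prop :=
  ∃ (u v : V) (h : G.Adj u v) (p : G.Walk u v), p.IsPath ∧ s(u, v) ∉ p.edges ∧
    H = G.subgraphOfAdj h ⊔ p.toSubgraph

/-!
Call a subgraph `A` nonseparable if for every vertex `s`, any two vertices of `A` other than `s`
are joined inside `A` by a walk avoiding `s`. A single edge is nonseparable, and adding a path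
with both ends in a nonseparable subgraph keeps it so: a new vertex reaches one end of the path
on the side away from `s`. Hence a graph with an ear decomposition is nonseparable, which for a
graph with at least three vertices is 2-connectedness.

Conversely, if `K < A` with `A` nonseparable and `K` having two vertices, then `K` has an ear
inside `A`: either an edge of `A` missing from `K`, or an edge `xy` leaving `K` followed by a
path from `y` back to `K` avoiding `x`. The first ear on an edge of `H` closes a cycle; adding
ears inside `H` and then inside `G` reaches `H` and `G`, since each ear adds an edge.
-/

lemma Set.exists_mem_ne_ne_of_three_le_natCard {α : Type*} {s : Set α} (h : 3 ≤ Nat.card s)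
    (x y : α) : ∃ z ∈ s, z ≠ x ∧ z ≠ y := by
  rw [Nat.card_coe_set_eq] at h
  have hpair : ({x, y} : Set α).ncard < s.ncard :=
    ((Set.ncard_insert_le x {y}).trans_eq (by rw [Set.ncard_singleton])).trans_lt (by omega)
  obtain ⟨z, hz, hzxy⟩ := Set.exists_mem_notMem_of_ncard_lt_ncard hpair
  simp only [Set.mem_insert_iff, Set.mem_singleton_iff, not_or] at hzxy
  exact ⟨z, hz, hzxy⟩

namespace SimpleGraph

variable {V : Type*} {G : SimpleGraph V}

lemma preconnected_induce_compl_singleton_iff {v : V} :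
    (G.induce {v}ᶜ).Preconnected ↔
      ∀ x y, x ≠ v → y ≠ v → ∃ p : G.Walk x y, v ∉ p.support := by
  refine ⟨fun h x y hx hy => ?_, fun h x y => ?_⟩
  · obtain ⟨q⟩ := h ⟨x, Set.mem_compl_singleton_iff.2 hx⟩ ⟨y, Set.mem_compl_singleton_iff.2 hy⟩
    have hq : ∀ w ∈ (q.map (Embedding.induce {v}ᶜ).toHom).support, w ≠ v := by
      rw [Walk.support_map]
      rintro _ hw
      obtain ⟨a, -, rfl⟩ := List.mem_map.1 hw
      exact a.2
    exact ⟨q.map (Embedding.induce {v}ᶜ).toHom, fun hv => hq v hv rfl⟩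
  · obtain ⟨p, hp⟩ := h x y x.2 y.2
    exact (p.induce {v}ᶜ fun w hw h => hp (h ▸ hw)).reachable

namespace Walk

lemma IsSubwalk.toSubgraph_le {u v u' v' : V} {p : G.Walk u v} {q : G.Walk u' v'}
    (h : p.IsSubwalk q) : p.toSubgraph ≤ q.toSubgraph := by
  obtain ⟨r, r', rfl⟩ := h
  simp only [toSubgraph_append]
  exact le_sup_right.trans le_sup_left

lemma IsPath.notMem_takeUntil_or_notMem_dropUntil [DecidableEq V] {u v x s : V}
    {p : G.Walk u v} (hp : p.IsPath) (hx : x ∈ p.support) (hs : s ≠ x) :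
    s ∉ (p.takeUntil x hx).support ∨ s ∉ (p.dropUntil x hx).support := by
  rw [← not_and_or]
  rintro ⟨htake, hdrop⟩
  have hnd := hp.support_nodup
  rw [← p.take_spec hx, support_append] at hnd
  rw [← cons_tail_support, List.mem_cons] at hdrop
  exact List.disjoint_of_nodup_append hnd htake (hdrop.resolve_left hs)

lemma IsPath.exists_walk_to_end_avoiding {u v x s : V} {p : G.Walk u v} (hp : p.IsPath)
    (hx : x ∈ p.support) (hs : s ≠ x) :
    ∃ t, (t = u ∨ t = v) ∧ ∃ r : G.Walk x t, r.toSubgraph ≤ p.toSubgraph ∧ s ∉ r.support := by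
  classical
  rcases hp.notMem_takeUntil_or_notMem_dropUntil hx hs with h | h
  · refine ⟨u, .inl rfl, (p.takeUntil x hx).reverse, ?_, by simpa using h⟩
    rw [toSubgraph_reverse]
    exact (p.isSubwalk_takeUntil hx).toSubgraph_le
  · exact ⟨v, .inr rfl, p.dropUntil x hx, (p.isSubwalk_dropUntil hx).toSubgraph_le, h⟩

lemma exists_append_first_mem {S : Set V} : ∀ {u v : V} (p : G.Walk u v), v ∈ S →
    ∃ (c : V) (q : G.Walk u c) (r : G.Walk c v), p = q.append r ∧ c ∈ S ∧
      ∀ w ∈ q.support, w ≠ c → w ∉ S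
  | _, _, nil, hv => ⟨_, nil, nil, rfl, hv, by simp⟩
  | u, _, cons h p, hv => by
    by_cases hu : u ∈ S
    · exact ⟨u, nil, cons h p, rfl, hu, by simp⟩
    · obtain ⟨c, q, r, rfl, hc, hqS⟩ := exists_append_first_mem p hv
      refine ⟨c, cons h q, r, rfl, hc, ?_⟩
      simp only [support_cons, List.mem_cons, forall_eq_or_imp]
      exact ⟨fun _ => hu, hqS⟩

end Walk

open Walk

namespace Subgraph

/-- `s` ranges over all of `V`, so for `s ∉ A.verts` this says that `A` is connected. -/
def Nonseparable (A : G.Subgraph) : Prop :=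
  ∀ s x y, x ∈ A.verts → y ∈ A.verts → x ≠ s → y ≠ s →
    ∃ p : G.Walk x y, p.toSubgraph ≤ A ∧ s ∉ p.support

variable {A K : G.Subgraph}

lemma nonseparable_of_adj (hA : ∀ x ∈ A.verts, ∀ y ∈ A.verts, x ≠ y → A.Adj x y) :
    A.Nonseparable := by
  intro s x y hx hy hxs hys
  by_cases hxy : x = y
  · subst hxy
    exact ⟨nil, by simpa [Walk.toSubgraph] using hx, by simpa using hxs.symm⟩
  · have hAxy := hA x hx y hy hxy
    refine ⟨hAxy.adj_sub.toWalk, ?_, by simp [hxs.symm, hys.symm]⟩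
    simpa using subgraphOfAdj_le_of_adj A hAxy

lemma nonseparable_subgraphOfAdj {u v : V} (h : G.Adj u v) :
    (G.subgraphOfAdj h).Nonseparable :=
  nonseparable_of_adj <| by
    simp only [subgraphOfAdj_verts, Set.mem_insert_iff, Set.mem_singleton_iff,
      subgraphOfAdj_adj]
    rintro x (rfl | rfl) y (rfl | rfl) hxy <;> simp_all [Sym2.eq_swap]

lemma Nonseparable.sup_toSubgraph (hK : K.Nonseparable) {a b : V} {p : G.Walk a b}
    (hp : p.IsPath) (ha : a ∈ K.verts) (hb : b ∈ K.verts) :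
    (K ⊔ p.toSubgraph).Nonseparable := by
  have reach : ∀ s, ∀ x ∈ (K ⊔ p.toSubgraph).verts, x ≠ s → ∃ t ∈ K.verts, t ≠ s ∧
      ∃ r : G.Walk x t, r.toSubgraph ≤ K ⊔ p.toSubgraph ∧ s ∉ r.support := by
    rintro s x (hx | hx) hxs
    · exact ⟨x, hx, hxs, nil, by simpa [Walk.toSubgraph] using Or.inl hx,
        by simpa using hxs.symm⟩
    · obtain ⟨t, ht, r, hr, hsr⟩ :=
        hp.exists_walk_to_end_avoiding (p.mem_verts_toSubgraph.1 hx) hxs.symm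
      exact ⟨t, by rcases ht with rfl | rfl <;> assumption,
        fun h => hsr (h ▸ r.end_mem_support), r, hr.trans le_sup_right, hsr⟩
  intro s x y hx hy hxs hys
  obtain ⟨t, ht, hts, r, hr, hsr⟩ := reach s x hx hxs
  obtain ⟨t', ht', hts', r', hr', hsr'⟩ := reach s y hy hys
  obtain ⟨q, hq, hsq⟩ := hK s t t' ht ht' hts hts'
  refine ⟨r.append (q.append r'.reverse), ?_, ?_⟩
  · simp only [toSubgraph_append, toSubgraph_reverse, sup_le_iff]
    exact ⟨hr, hq.trans le_sup_left, hr'⟩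
  · simp [mem_support_append_iff, hsr, hsq, hsr']

lemma nonseparable_top (h : ∀ v, (G.induce {v}ᶜ).Preconnected) :
    (⊤ : G.Subgraph).Nonseparable := by
  intro s x y _ _ hxs hys
  obtain ⟨p, hp⟩ := preconnected_induce_compl_singleton_iff.1 (h s) x y hxs hys
  exact ⟨p, le_top, hp⟩

lemma nonseparable_of_twoConnected_coe (h : TwoConnected A.coe) : A.Nonseparable := by
  intro s x y hx hy hxs hys
  obtain ⟨q, hq⟩ : ∃ q : A.coe.Walk ⟨x, hx⟩ ⟨y, hy⟩, ∀ a ∈ q.support, a.1 ≠ s := by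
    by_cases hs : s ∈ A.verts
    · obtain ⟨q, hq⟩ := preconnected_induce_compl_singleton_iff.1 (h.2.2 ⟨s, hs⟩).preconnected
        ⟨x, hx⟩ ⟨y, hy⟩ (by simpa using hxs) (by simpa using hys)
      refine ⟨q, fun a ha has => hq ?_⟩
      rwa [show (⟨s, hs⟩ : A.verts) = a from Subtype.ext has.symm]
    · obtain ⟨q⟩ := h.2.1.preconnected ⟨x, hx⟩ ⟨y, hy⟩
      exact ⟨q, fun a _ h => hs (h ▸ a.2)⟩
  have hqA : (q.map A.hom).toSubgraph ≤ A := by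
    rw [toSubgraph_map]
    exact coeSubgraph_le _
  have hqs : s ∉ (q.map A.hom).support := by
    rw [Walk.support_map, List.mem_map]
    rintro ⟨a, ha, has⟩
    exact hq a ha has
  exact ⟨q.map A.hom, hqA, hqs⟩

structure IsEar (K : G.Subgraph) {u v : V} (p : G.Walk u v) : Prop where
  isPath : p.IsPath
  length_pos : 0 < p.length
  start_mem : u ∈ K.verts
  end_mem : v ∈ K.verts
  internal_notMem : ∀ w ∈ p.support, w ≠ u → w ≠ v → w ∉ K.verts
  edges_notMem : ∀ e ∈ p.edges, e ∉ K.edgeSet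

lemma IsEar.not_toSubgraph_le {u v : V} {p : G.Walk u v} (hp : K.IsEar p) :
    ¬p.toSubgraph ≤ K := by
  intro hle
  obtain ⟨e, he⟩ := List.exists_mem_of_length_pos (p.length_edges ▸ hp.length_pos)
  exact hp.edges_notMem e he (edgeSet_mono hle (p.mem_edges_toSubgraph.2 he))

lemma isEar_toWalk {x y : V} (h : G.Adj x y) (hx : x ∈ K.verts) (hy : y ∈ K.verts)
    (hxy : ¬K.Adj x y) : K.IsEar h.toWalk where
  isPath := Walk.IsPath.of_adj h
  length_pos := by simp
  start_mem := hx
  end_mem := hy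
  internal_notMem := by simp +contextual
  edges_notMem := by simpa using hxy

lemma isEar_cons {x y c : V} (h : G.Adj x y) {q : G.Walk y c} (hq : q.IsPath)
    (hxq : x ∉ q.support) (hx : x ∈ K.verts) (hy : y ∉ K.verts) (hc : c ∈ K.verts)
    (hqK : ∀ w ∈ q.support, w ≠ c → w ∉ K.verts) : K.IsEar (cons h q) where
  isPath := hq.cons hxq
  length_pos := by simp
  start_mem := hx
  end_mem := hc
  internal_notMem w hw hwx hwc := by
    rw [support_cons, List.mem_cons] at hw
    exact hqK w (hw.resolve_left hwx) hwc
  edges_notMem e he heK := by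
    rw [edges_cons, List.mem_cons] at he
    rcases he with rfl | he
    · exact hy (Subgraph.mem_edgeSet.1 heK).snd_mem
    · induction e using Sym2.ind with
      | _ a b =>
        have hab := Subgraph.mem_edgeSet.1 heK
        have hqc : ∀ w ∈ q.support, w ∈ K.verts → w = c := fun w hw hwK =>
          by_contra fun h => hqK w hw h hwK
        exact hab.ne ((hqc a (q.fst_mem_support_of_mem_edges he) hab.fst_mem).trans
          (hqc b (q.snd_mem_support_of_mem_edges he) hab.snd_mem).symm)

lemma Nonseparable.exists_isEar (hA : A.Nonseparable) (hKA : K ≤ A) (hK : K.verts.Nontrivial)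
    (hAK : ¬A ≤ K) : ∃ (u v : V) (p : G.Walk u v), K.IsEar p ∧ p.toSubgraph ≤ A := by
  by_cases hV : A.verts ⊆ K.verts
  · obtain ⟨x, y, hAxy, hKxy⟩ : ∃ x y, A.Adj x y ∧ ¬K.Adj x y := by
      by_contra! h
      exact hAK ⟨hV, h⟩
    refine ⟨x, y, hAxy.adj_sub.toWalk,
      isEar_toWalk _ (hV hAxy.fst_mem) (hV hAxy.snd_mem) hKxy, ?_⟩
    simpa using subgraphOfAdj_le_of_adj A hAxy
  -- The ear leaves `K` along an edge `xy` of `A` and comes back along a path from `y` avoiding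
  -- `x`, cut at its first vertex in `K`.
  obtain ⟨y₀, hy₀A, hy₀K⟩ := Set.not_subset.1 hV
  obtain ⟨a, ha, b, hb, hab⟩ := id hK
  obtain ⟨p, hpA, -⟩ := hA b a y₀ (hKA.1 ha) hy₀A hab fun h => hy₀K (h ▸ hb)
  obtain ⟨d, hd, hdK, hdK'⟩ := p.exists_boundary_dart K.verts ha hy₀K
  have hAd : A.Adj d.fst d.snd :=
    hpA.2 (adj_toSubgraph_iff_mem_edges.2 (List.mem_map_of_mem (f := Dart.edge) hd))
  obtain ⟨z, hz, hzd⟩ := hK.exists_ne d.fst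
  obtain ⟨r, hrA, hdr⟩ :=
    hA d.fst d.snd z hAd.snd_mem (hKA.1 hz) (fun h => hdK' (h ▸ hdK)) hzd
  classical
  obtain ⟨c, q, q', hqq', hc, hqK⟩ := r.bypass.exists_append_first_mem (S := K.verts) hz
  have hq : q.IsSubwalk r.bypass := isSubwalk_of_append_left hqq'
  refine ⟨d.fst, c, cons hAd.adj_sub q, isEar_cons _ (isPath_of_isSubwalk hq r.bypass_isPath)
    (fun h => hdr (r.support_bypass_subset_support (hq.support_subset h))) hdK hdK' hc hqK, ?_⟩
  exact sup_le (subgraphOfAdj_le_of_adj A hAd)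
    (hq.toSubgraph_le.trans (toSubgraph_bypass_le_toSubgraph.trans hrA))

end Subgraph

end SimpleGraph

open SimpleGraph Subgraph

section

variable {V : Type*} {G : SimpleGraph V}

namespace EarExt

variable {H K L : G.Subgraph}

lemma addEar (h : EarExt G H K) {u v : V} {p : G.Walk u v} (hp : K.IsEar p) :
    EarExt G H (K ⊔ p.toSubgraph) :=
  .ear h p hp.isPath hp.length_pos hp.start_mem hp.end_mem hp.internal_notMem hp.edges_notMem

lemma trans (h₁ : EarExt G H K) (h₂ : EarExt G K L) : EarExt G H L := by
  induction h₂ with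
  | refl => exact h₁
  | ear _ p hp hlen hu hv hint hedge ih => exact .ear ih p hp hlen hu hv hint hedge

lemma nonseparable (h : EarExt G H K) (hH : H.Nonseparable) : K.Nonseparable := by
  induction h with
  | refl => exact hH
  | ear _ _ hp _ hu hv _ _ ih => exact ih.sup_toSubgraph hp hu hv

lemma finite_verts (h : EarExt G H K) (hH : H.verts.Finite) : K.verts.Finite := by
  induction h with
  | refl => exact hH
  | ear _ p _ _ _ _ _ _ ih =>
    rw [verts_sup, Walk.verts_toSubgraph]
    exact ih.union p.support.finite_toSet

end EarExt

namespace IsCycleStart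

variable {C : G.Subgraph}

lemma nonseparable (h : IsCycleStart G C) : C.Nonseparable := by
  obtain ⟨u, v, huv, p, hp, -, rfl⟩ := h
  exact (nonseparable_subgraphOfAdj huv).sup_toSubgraph hp (by simp) (by simp)

lemma finite_verts (h : IsCycleStart G C) : C.verts.Finite := by
  obtain ⟨u, v, huv, p, -, -, rfl⟩ := h
  rw [verts_sup, subgraphOfAdj_verts, Walk.verts_toSubgraph]
  exact (Set.toFinite _).union p.support.finite_toSet

/-- The second vertex of the path `p` differs from both of its ends, since `p` avoids `uv`. -/
lemma two_lt_ncard_verts (h : IsCycleStart G C) : 2 < C.verts.ncard := by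
  rw [Set.two_lt_ncard h.finite_verts]
  obtain ⟨u, v, huv, p, -, hpuv, rfl⟩ := h
  have hp : ¬p.Nil := fun hp => huv.ne hp.eq
  have hsnd := p.toSubgraph_adj_snd hp
  refine ⟨u, by simp, v, by simp, p.snd, Or.inr hsnd.snd_mem, huv.ne, hsnd.adj_sub.ne,
    fun h => hpuv ?_⟩
  rwa [Walk.adj_toSubgraph_iff_mem_edges, ← h] at hsnd

end IsCycleStart

lemma isCycleStart_sup_of_isEar {u v a b : V} (h : G.Adj u v) {p : G.Walk a b}
    (hp : (G.subgraphOfAdj h).IsEar p) : IsCycleStart G (G.subgraphOfAdj h ⊔ p.toSubgraph) := by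
  have hab : a ≠ b := by
    rintro rfl
    exact hp.length_pos.ne' (Walk.length_eq_zero_iff.2 (Walk.isPath_iff_nil.1 hp.isPath))
  have huv : s(u, v) ∉ p.edges := fun he => hp.edges_notMem _ he (by simp)
  have ha := hp.start_mem
  have hb := hp.end_mem
  simp only [subgraphOfAdj_verts, Set.mem_insert_iff, Set.mem_singleton_iff] at ha hb
  rcases ha with rfl | rfl <;> rcases hb with rfl | rfl
  · exact absurd rfl hab
  · exact ⟨a, b, h, p, hp.isPath, huv, rfl⟩
  · exact ⟨a, b, h.symm, p, hp.isPath, by rwa [Sym2.eq_swap], by rw [subgraphOfAdj_symm]⟩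
  · exact absurd rfl hab

lemma SimpleGraph.Subgraph.Nonseparable.exists_isCycleStart_le {A : G.Subgraph}
    (hA : A.Nonseparable) (h3 : 3 ≤ Nat.card A.verts) :
    ∃ C, IsCycleStart G C ∧ C ≤ A ∧ C.verts.Nontrivial := by
  obtain ⟨x, hx⟩ : A.verts.Nonempty := Set.nonempty_coe_sort.1 (Nat.card_pos_iff.1 (by omega)).1
  obtain ⟨y, hy, hyx, -⟩ := Set.exists_mem_ne_ne_of_three_le_natCard h3 x x
  obtain ⟨z, hz, hzx, hzy⟩ := Set.exists_mem_ne_ne_of_three_le_natCard h3 x y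
  obtain ⟨p, hpA, -⟩ := hA z x y hx hy hzx.symm hzy.symm
  have hp : ¬p.Nil := fun hp => hyx hp.eq.symm
  have hxy : A.Adj x p.snd := hpA.2 (p.toSubgraph_adj_snd hp)
  have hKA := subgraphOfAdj_le_of_adj A hxy
  have hK : (G.subgraphOfAdj hxy.adj_sub).verts.Nontrivial :=
    ⟨x, by simp, p.snd, by simp, hxy.ne⟩
  obtain ⟨w, hw, hwx, hwy⟩ := Set.exists_mem_ne_ne_of_three_le_natCard h3 x p.snd
  have hAK : ¬A ≤ G.subgraphOfAdj hxy.adj_sub := fun h => by simpa [hwx, hwy] using h.1 hw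
  obtain ⟨a, b, q, hq, hqA⟩ := hA.exists_isEar hKA hK hAK
  exact ⟨_, isCycleStart_sup_of_isEar _ hq, sup_le hKA hqA, hK.mono Set.subset_union_left⟩

theorem SimpleGraph.Subgraph.Nonseparable.earExt_of_le [Finite V] {A K : G.Subgraph}
    (hA : A.Nonseparable) (hKA : K ≤ A) (hK : K.verts.Nontrivial) : EarExt G K A := by
  induction K using WellFoundedGT.induction with
  | _ K ih =>
  by_cases hAK : A ≤ K
  · rw [le_antisymm hKA hAK]
    exact .refl A
  obtain ⟨u, v, p, hp, hpA⟩ := hA.exists_isEar hKA hK hAK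
  exact ((EarExt.refl K).addEar hp).trans
    (ih _ (left_lt_sup.2 hp.not_toSubgraph_le) (sup_le hKA hpA) (hK.mono Set.subset_union_left))

lemma twoConnected_of_nonseparable_top (h3 : 3 ≤ Nat.card V)
    (h : (⊤ : G.Subgraph).Nonseparable) : TwoConnected G := by
  have hwalk : ∀ s x y, x ≠ s → y ≠ s → ∃ p : G.Walk x y, s ∉ p.support :=
    fun s x y hx hy => (h s x y trivial trivial hx hy).imp fun _ => And.right
  have hthird (x y : V) : ∃ z, z ≠ x ∧ z ≠ y := by
    simpa using Set.exists_mem_ne_ne_of_three_le_natCard (s := Set.univ)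
      (by rwa [Nat.card_univ]) x y
  have : Nonempty V := (Nat.card_pos_iff.1 (by omega)).1
  refine ⟨h3, ⟨fun x y => ?_⟩, fun s => ?_⟩
  · obtain ⟨z, hzx, hzy⟩ := hthird x y
    obtain ⟨p, -⟩ := hwalk z x y hzx.symm hzy.symm
    exact p.reachable
  · obtain ⟨z, hzs, -⟩ := hthird s s
    have : Nonempty ({s}ᶜ : Set V) := ⟨⟨z, hzs⟩⟩
    exact ⟨preconnected_induce_compl_singleton_iff.2 (hwalk s)⟩

theorem twoConnected_of_earExt {C : G.Subgraph} (hC : IsCycleStart G C) (hCG : EarExt G C ⊤) :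
    TwoConnected G := by
  have : Finite V := Set.finite_univ_iff.1 (hCG.finite_verts hC.finite_verts)
  refine twoConnected_of_nonseparable_top ?_ (hCG.nonseparable hC.nonseparable)
  rw [← Set.ncard_univ]
  exact hC.two_lt_ncard_verts.trans_le (Set.ncard_le_ncard (Set.subset_univ _))

theorem TwoConnected.exists_earExt (hG : TwoConnected G) {H : G.Subgraph}
    (hH : TwoConnected H.coe) : ∃ C, IsCycleStart G C ∧ EarExt G C H ∧ EarExt G H ⊤ := by
  have : Finite V := Nat.finite_of_card_ne_zero (by have := hG.1; omega)
  have hHn : H.Nonseparable := nonseparable_of_twoConnected_coe hH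
  obtain ⟨C, hC, hCH, hCnt⟩ := hHn.exists_isCycleStart_le hH.1
  exact ⟨C, hC, hHn.earExt_of_le hCH hCnt,
    (nonseparable_top fun v => (hG.2.2 v).preconnected).earExt_of_le le_top (hCnt.mono hCH.1)⟩

end

/-- A graph with an ear decomposition is 2-connected; conversely, a 2-connected graph
has an ear decomposition beginning with an ear decomposition of any given 2-connected
subgraph `H`. -/
theorem stmt_18 {V : Type*} (G : SimpleGraph V) :
    ((∃ C0, IsCycleStart G C0 ∧ EarExt G C0 ⊤) → TwoConnected G) ∧
      (TwoConnected G → ∀ H : G.Subgraph, TwoConnected H.coe →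
        ∃ C0, IsCycleStart G C0 ∧ EarExt G C0 H ∧ EarExt G H ⊤) :=
  ⟨fun ⟨_, hC, hCG⟩ => twoConnected_of_earExt hC hCG, fun hG _ hH => hG.exists_earExt hH⟩
end
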